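/- arXiv:1407.1996 — 3 statements merged into one kernel-verified Lean document; each statement's English description precedes it below -/
import Mathlib

section
/- Let G be a one-counter graph and F ⊆ V_∃. A positional strategy for Adam assigns to every arena vertex (v,c) with v ∉ V_∃ a single outgoing edge, depending only on (v,c). Fix a positional strategy σ for Adam and a vertex (q_0,0) of the arena. If Eve has a strategy such that every play from (q_0,0) consistent with both her strategy and σ visits vertices of F × {0} at least |F|+1 times, then Eve has a strategy such that the play from (q_0,0) consistent with it and σ visits some fixed vertex (v,0) with v ∈ F infinitely often (in particular, it visits F × {0} infinitely often). -/
/-!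
One-counter graphs and the games played on their infinite arenas.

A one-counter graph is a tuple `(V, V_∃, E, E_0, E_{≠0}, q_0, w)`.  We bundle the
weight function into the edge set: an edge of `E` is a triple `(source, weight, target)`
(this also allows parallel edges of different weights).  The arena has vertex set
`Q × ℤ`; Eve owns the vertices whose state lies in `Eve`, Adam owns the rest.
-/

/-- A one-counter graph: states `Q`, Eve's states `Eve` (the remaining states are
Adam's), weighted edges `E ⊆ Q × ℤ × Q`, edges `E0` activated only when the counter
is `0`, edges `Ene` activated only when the counter is nonzero, and initial state `q0`. -/
structure OCG (Q : Type) where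
  Eve : Set Q
  E : Set (Q × ℤ × Q)
  E0 : Set (Q × Q)
  Ene : Set (Q × Q)
  q0 : Q

namespace OCG

variable {Q : Type}

/-- The edge relation of the infinite arena on `Q × ℤ`. -/
def Step (G : OCG Q) (p q : Q × ℤ) : Prop :=
  (∃ c : ℤ, (p.1, c, q.1) ∈ G.E ∧ q.2 = p.2 + c) ∨
  ((p.1, q.1) ∈ G.E0 ∧ p.2 = 0 ∧ q.2 = 0) ∨
  ((p.1, q.1) ∈ G.Ene ∧ p.2 ≠ 0 ∧ q.2 = p.2)

/-- A strategy for Eve: given the strict past history (earliest vertex first) and the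
current vertex, choose a next vertex. -/
def EStrat (Q : Type) : Type := List (Q × ℤ) → (Q × ℤ) → (Q × ℤ)

/-- An Eve strategy is legal if at every Eve vertex that has a successor it chooses
an actual successor. -/
def EStrat.Legal (G : OCG Q) (σ : EStrat Q) : Prop :=
  ∀ h p, p.1 ∈ G.Eve → (∃ q, G.Step p q) → G.Step p (σ h p)

/-- The history of a (partial) play strictly before step `n`. -/
def hist (π : ℕ → Option (Q × ℤ)) (n : ℕ) : List (Q × ℤ) :=
  (List.range n).filterMap π

/-- `IsPlay G σ v π` : `π` is a maximal play of the arena of `G` from `v` in which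
Eve plays according to `σ` (at Adam's vertices any successor may be chosen).
`π n = none` signifies that the (finite, maximal) play has already ended. -/
def IsPlay (G : OCG Q) (σ : EStrat Q) (v : Q × ℤ) (π : ℕ → Option (Q × ℤ)) : Prop :=
  π 0 = some v ∧ ∀ n,
    (π n = none → π (n + 1) = none) ∧
    ∀ p, π n = some p →
      ((¬ ∃ q, G.Step p q) → π (n + 1) = none) ∧
      ((∃ q, G.Step p q) → ∃ q, π (n + 1) = some q ∧ G.Step p q ∧
        (p.1 ∈ G.Eve → q = σ (hist π n) p))

/-- Eve has a winning strategy for the reachability game on `G` with target set `F`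
and target value `t`, from the arena vertex `v`: some legal strategy of hers ensures
that every consistent maximal play visits a vertex `(f, t)` with `f ∈ F`. -/
def WinsReach (G : OCG Q) (F : Set Q) (t : ℤ) (v : Q × ℤ) : Prop :=
  ∃ σ : EStrat Q, σ.Legal G ∧
    ∀ π, IsPlay G σ v π → ∃ n p, π n = some p ∧ p.1 ∈ F ∧ p.2 = t

end OCG

open Sum OCG

namespace OCG

/-- A positional strategy for Adam: a single choice of successor for every arena
vertex, depending only on the vertex. -/
def AStratPos (Q : Type) : Type := (Q × ℤ) → (Q × ℤ)

/-- A positional Adam strategy is legal if at every Adam vertex that has a successor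
it chooses an actual successor. -/
def AStratPos.Legal {Q : Type} (G : OCG Q) (τ : AStratPos Q) : Prop :=
  ∀ p, p.1 ∉ G.Eve → (∃ q, G.Step p q) → G.Step p (τ p)

/-- `IsPlayBoth G σ τ v π` : `π` is a maximal play of the arena of `G` from `v` in
which Eve plays according to the strategy `σ` and Adam plays according to the
positional strategy `τ`. -/
def IsPlayBoth {Q : Type} (G : OCG Q) (σ : EStrat Q) (τ : AStratPos Q) (v : Q × ℤ)
    (π : ℕ → Option (Q × ℤ)) : Prop :=
  π 0 = some v ∧ ∀ n,
    (π n = none → π (n + 1) = none) ∧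
    ∀ p, π n = some p →
      ((¬ ∃ q, G.Step p q) → π (n + 1) = none) ∧
      ((∃ q, G.Step p q) → ∃ q, π (n + 1) = some q ∧ G.Step p q ∧
        (p.1 ∈ G.Eve → q = σ (hist π n) p) ∧ (p.1 ∉ G.Eve → q = τ p))

end OCG

/-!
Against a positional Adam strategy `τ`, a strategy `σ` of Eve determines a single play. If it
visits `F × {0}` more than `|F|` times, then two of these visits, at times `a < b`, are at the
same vertex `(v, 0)`. The lasso that follows the play up to time `a` and then repeats the segment
between `a` and `b` forever is again a path of the arena consistent with `τ`, and Eve can force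
any such path by playing its next vertex, read off from the length of the history.
-/

theorem Fintype.exists_lt_map_eq_of_card_lt {α β : Type*} [LinearOrder α] [Fintype α]
    [Fintype β] (g : α → β) (h : Fintype.card β < Fintype.card α) :
    ∃ i j, i < j ∧ g i = g j := by
  obtain ⟨i, j, hne, hg⟩ := Fintype.exists_ne_map_eq_of_card_lt g h
  rcases hne.lt_or_gt with hij | hji
  · exact ⟨i, j, hij, hg⟩
  · exact ⟨j, i, hji, hg.symm⟩

section Lasso

variable {α : Type*}

def lasso (u : ℕ → α) (a b n : ℕ) : α :=
  if n < a then u n else u (a + (n - a) % (b - a))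

theorem lasso_zero (u : ℕ → α) (a b : ℕ) : lasso u a b 0 = u 0 := by
  rcases Nat.eq_zero_or_pos a with rfl | ha
  · simp [lasso]
  · simp [lasso, ha]

theorem lasso_add_mul (u : ℕ → α) (a b N : ℕ) : lasso u a b (a + N * (b - a)) = u a := by
  simp [lasso]

theorem exists_lasso_eq (u : ℕ → α) {a b : ℕ} (hab : a < b) (hu : u a = u b) (n : ℕ) :
    ∃ m < b, lasso u a b n = u m ∧ lasso u a b (n + 1) = u (m + 1) := by
  by_cases hna : n + 1 < a
  · exact ⟨n, by omega, if_pos (by omega), if_pos hna⟩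
  by_cases hn : n < a
  · refine ⟨n, by omega, if_pos hn, ?_⟩
    rw [lasso, if_neg hna, show n + 1 - a = 0 by omega, Nat.zero_mod, Nat.add_zero,
      show n + 1 = a by omega]
  set m := (n - a) % (b - a)
  have hm : m < b - a := Nat.mod_lt _ (by omega)
  have hsucc : (n + 1 - a) % (b - a) = (m + 1) % (b - a) := by
    rw [show n + 1 - a = n - a + 1 by omega, ← Nat.mod_add_mod]
  refine ⟨a + m, by omega, if_neg hn, ?_⟩
  rw [lasso, if_neg hna, hsucc]
  rcases (Nat.succ_le_of_lt hm).eq_or_lt with hlast | hinner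
  · rw [← hlast, Nat.mod_self, Nat.add_zero, hu]
    congr 1
    omega
  · rw [Nat.mod_eq_of_lt hinner, Nat.add_assoc]

theorem lasso_rel (R : α → α → Prop) (u : ℕ → α) {a b : ℕ} (hab : a < b) (hu : u a = u b)
    (hR : ∀ m < b, R (u m) (u (m + 1))) (n : ℕ) : R (lasso u a b n) (lasso u a b (n + 1)) := by
  obtain ⟨m, hm, hn, hn1⟩ := exists_lasso_eq u hab hu n
  exact hn ▸ hn1 ▸ hR m hm

end Lasso

namespace OCG

variable {Q : Type} {G : OCG Q} {σ : EStrat Q} {τ : AStratPos Q} {v : Q × ℤ}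
  {π : ℕ → Option (Q × ℤ)}

def StepWith (G : OCG Q) (τ : AStratPos Q) (p q : Q × ℤ) : Prop :=
  G.Step p q ∧ (p.1 ∉ G.Eve → q = τ p)

theorem hist_succ (π : ℕ → Option (Q × ℤ)) (n : ℕ) :
    hist π (n + 1) = hist π n ++ (π n).toList := by
  rw [hist, hist, List.range_succ, List.filterMap_append]
  cases h : π n <;> simp [h]

theorem IsPlayBoth.eq_none_of_le (h : IsPlayBoth G σ τ v π) {n m : ℕ} (hnm : n ≤ m)
    (hn : π n = none) : π m = none := by
  induction m, hnm using Nat.le_induction with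
  | base => exact hn
  | succ m _ ih => exact (h.2 m).1 ih

theorem IsPlayBoth.eq_some_getD_of_le (h : IsPlayBoth G σ τ v π) {n m : ℕ} {x : Q × ℤ}
    (hm : π m = some x) (hnm : n ≤ m) (d : Q × ℤ) : π n = some ((π n).getD d) := by
  cases hn : π n
  · simp [h.eq_none_of_le hnm hn] at hm
  · rfl

theorem IsPlayBoth.stepWith (h : IsPlayBoth G σ τ v π) {n : ℕ} {p q : Q × ℤ}
    (hp : π n = some p) (hq : π (n + 1) = some q) : G.StepWith τ p q := by
  have hmoves : ∃ q, G.Step p q := by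
    by_contra hstuck
    simp [((h.2 n).2 p hp).1 hstuck] at hq
  obtain ⟨q', hq', hstep, -, hadam⟩ := ((h.2 n).2 p hp).2 hmoves
  obtain rfl : q = q' := Option.some_injective _ (hq.symm.trans hq')
  exact ⟨hstep, hadam⟩

open Classical in
noncomputable def outcomeAux (G : OCG Q) (σ : EStrat Q) (τ : AStratPos Q) (v : Q × ℤ) :
    ℕ → List (Q × ℤ) × Option (Q × ℤ)
  | 0 => ([], some v)
  | n + 1 =>
    match outcomeAux G σ τ v n with
    | (h, none) => (h, none)
    | (h, some p) =>
        (h ++ [p],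
          if ∃ q, G.Step p q then some (if p.1 ∈ G.Eve then σ h p else τ p) else none)

noncomputable def outcome (G : OCG Q) (σ : EStrat Q) (τ : AStratPos Q) (v : Q × ℤ)
    (n : ℕ) : Option (Q × ℤ) :=
  (outcomeAux G σ τ v n).2

theorem hist_outcome (n : ℕ) : hist (outcome G σ τ v) n = (outcomeAux G σ τ v n).1 := by
  induction n with
  | zero => simp [hist, outcomeAux]
  | succ n ih =>
    rw [hist_succ, ih]
    rcases hr : outcomeAux G σ τ v n with ⟨h, _ | p⟩ <;> simp [outcome, outcomeAux, hr]

theorem isPlayBoth_outcome (hσ : σ.Legal G) (hτ : τ.Legal G) :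
    IsPlayBoth G σ τ v (outcome G σ τ v) := by
  classical
  refine ⟨by simp [outcome, outcomeAux], fun n => ?_⟩
  rcases hr : outcomeAux G σ τ v n with ⟨h, _ | p⟩
  · refine ⟨fun _ => by simp [outcome, outcomeAux, hr], fun p hp => ?_⟩
    simp [outcome, hr] at hp
  refine ⟨fun hn => by simp [outcome, hr] at hn, fun p' hp' => ?_⟩
  obtain rfl : p = p' := by simpa [outcome, hr] using hp'
  refine ⟨fun hstuck => by simp [outcome, outcomeAux, hr, hstuck], fun hmoves => ?_⟩
  refine ⟨if p.1 ∈ G.Eve then σ h p else τ p, by simp [outcome, outcomeAux, hr, hmoves],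
    ?_, fun he => by simp [hist_outcome, hr, he], fun he => by simp [he]⟩
  by_cases he : p.1 ∈ G.Eve
  · simpa [he] using hσ h p he hmoves
  · simpa [he] using hτ p he hmoves

open Classical in
theorem exists_legal_forcing (ρ : ℕ → Q × ℤ) (hρ : ∀ n, G.StepWith τ (ρ n) (ρ (n + 1))) :
    ∃ σ : EStrat Q, σ.Legal G ∧
      ∀ π, IsPlayBoth G σ τ (ρ 0) π → ∀ n, π n = some (ρ n) := by
  refine ⟨fun h p =>
    if G.Step p (ρ (h.length + 1)) then ρ (h.length + 1)
    else if hmoves : ∃ q, G.Step p q then hmoves.choose else p, ?_, ?_⟩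
  · intro h p _ hmoves
    by_cases hnext : G.Step p (ρ (h.length + 1))
    · simp [hnext]
    · simpa [hnext, hmoves] using hmoves.choose_spec
  intro π hπ n
  suffices h : π n = some (ρ n) ∧ (hist π n).length = n from h.1
  induction n with
  | zero => exact ⟨hπ.1, by simp [hist]⟩
  | succ n ih =>
    refine ⟨?_, by simp [hist_succ, ih.1, ih.2]⟩
    obtain ⟨q, hq, -, heve, hadam⟩ := ((hπ.2 n).2 (ρ n) ih.1).2 ⟨_, (hρ n).1⟩
    by_cases he : (ρ n).1 ∈ G.Eve
    · simp only [hq, heve he, ih.2, if_pos (hρ n).1]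
    · rw [hq, hadam he, ← (hρ n).2 he]

theorem IsPlayBoth.exists_legal_visits_infinitely_of_revisit (h : IsPlayBoth G σ τ v π)
    {a b : ℕ} (hab : a < b) {x : Q × ℤ} (ha : π a = some x) (hb : π b = some x) :
    ∃ σ' : EStrat Q, σ'.Legal G ∧
      ∀ π', IsPlayBoth G σ' τ v π' → ∀ N, ∃ n ≥ N, π' n = some x := by
  set u : ℕ → Q × ℤ := fun n => (π n).getD x
  have hu (n : ℕ) (hn : n ≤ b) : π n = some (u n) := h.eq_some_getD_of_le hb hn x
  have hpath (m : ℕ) (hm : m < b) : G.StepWith τ (u m) (u (m + 1)) :=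
    h.stepWith (hu m hm.le) (hu (m + 1) hm)
  have hua : u a = x := by simp [u, ha]
  have hub : u b = x := by simp [u, hb]
  have hstart : lasso u a b 0 = v := by simp [lasso_zero, u, h.1]
  obtain ⟨σ', hσ', hforce⟩ :=
    exists_legal_forcing (lasso u a b) (lasso_rel _ u hab (hua.trans hub.symm) hpath)
  refine ⟨σ', hσ', fun π' hπ' N => ⟨a + N * (b - a), ?_, ?_⟩⟩
  · have := Nat.le_mul_of_pos_right N (Nat.sub_pos_of_lt hab)
    omega
  · rw [hforce π' (hstart ▸ hπ'), lasso_add_mul, hua]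

end OCG

theorem pumping_buchi_general {Q : Type} (G : OCG Q) (F : Finset Q)
    (q0 : Q) (τ : AStratPos Q) (hτ : τ.Legal G)
    (hwin : ∃ σ : EStrat Q, σ.Legal G ∧
      ∀ π, IsPlayBoth G σ τ (q0, 0) π →
        ∃ f : Fin (F.card + 1) → ℕ, StrictMono f ∧
          ∀ k, ∃ p, π (f k) = some p ∧ p.1 ∈ F ∧ p.2 = 0) :
    ∃ v ∈ F, ∃ σ : EStrat Q, σ.Legal G ∧
      ∀ π, IsPlayBoth G σ τ (q0, 0) π →
        ∀ N, ∃ n ≥ N, π n = some (v, 0) := by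
  obtain ⟨σ, hσ, hvisits⟩ := hwin
  have hplay := isPlayBoth_outcome (v := (q0, 0)) hσ hτ
  obtain ⟨f, hf, hvisit⟩ := hvisits _ hplay
  choose p hp hpF hp0 using hvisit
  obtain ⟨i, j, hij, hpij⟩ := Fintype.exists_lt_map_eq_of_card_lt
    (fun k => (⟨(p k).1, hpF k⟩ : F)) (by simp)
  have hvisit (k) (hk : (p k).1 = (p i).1) : outcome G σ τ (q0, 0) (f k) = some ((p i).1, 0) := by
    rw [hp k, ← hk, ← hp0 k]
  exact ⟨(p i).1, hpF i, hplay.exists_legal_visits_infinitely_of_revisit (hf hij) (hvisit i rfl)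
    (hvisit j (congrArg Subtype.val hpij).symm)⟩

/-- Against a fixed legal positional strategy `τ` of Adam: if Eve has a (legal)
strategy guaranteeing that every play from `(q0, 0)` consistent with her strategy and
with `τ` visits `F × {0}` at least `|F| + 1` times, then she has a (legal) strategy
guaranteeing that every such play visits some fixed vertex `(v, 0)`, `v ∈ F`,
infinitely often. -/
theorem pumping_buchi {Q : Type} (G : OCG Q) (F : Finset Q) (hF : ↑F ⊆ G.Eve)
    (q0 : Q) (τ : AStratPos Q) (hτ : τ.Legal G)
    (hwin : ∃ σ : EStrat Q, σ.Legal G ∧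
      ∀ π, IsPlayBoth G σ τ (q0, 0) π →
        ∃ f : Fin (F.card + 1) → ℕ, StrictMono f ∧
          ∀ k, ∃ p, π (f k) = some p ∧ p.1 ∈ F ∧ p.2 = 0) :
    ∃ v ∈ F, ∃ σ : EStrat Q, σ.Legal G ∧
      ∀ π, IsPlayBoth G σ τ (q0, 0) π →
        ∀ N, ∃ n ≥ N, π n = some (v, 0) :=
  pumping_buchi_general G F q0 τ hτ hwin
end

section
/- Let n ≥ 5 and let M ≥ 1 be an integer such that every odd integer m with 0 < m < 2^n divides M. Then, as real numbers, M ≥ 2^(2^n/n − 1). -/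
/-!
Every `m ≤ 2 ^ n` is a power of two dividing `2 ^ n` times an odd number below `2 ^ n`, so
`2 ^ n * M` is a common multiple of `1, …, 2 ^ n`. The least such multiple is divisible by every
`choose (2 ^ n) k`, hence at least `2 ^ (2 ^ n) / (2 ^ n + 1)`. This gives
`2 ^ (2 ^ n) ≤ 2 ^ (2 * n + 1) * M`, and `2 ^ n / n - 1 ≤ 2 ^ n - (2 * n + 1)` once `n ≥ 4`.
-/

open Nat

theorem lcmUpto_two_pow_dvd_two_pow_mul {n M : ℕ}
    (h : ∀ m : ℕ, Odd m → 0 < m → m < 2 ^ n → m ∣ M) : lcmUpto (2 ^ n) ∣ 2 ^ n * M := by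
  refine Finset.lcm_dvd fun m hm => ?_
  obtain ⟨hm_pos, hm_le⟩ := Finset.mem_Icc.mp hm
  obtain ⟨k, o, ho, rfl⟩ := exists_eq_two_pow_mul_odd (n := m) (by omega)
  have hk : 2 ^ k ≤ 2 ^ n := le_trans (Nat.le_mul_of_pos_right _ ho.pos) hm_le
  have ho_le : o ≤ 2 ^ n := le_trans (Nat.le_mul_of_pos_left _ (by positivity)) hm_le
  refine mul_dvd_mul (pow_dvd_pow 2 ((Nat.pow_le_pow_iff_right one_lt_two).mp hk)) ?_
  rcases ho_le.lt_or_eq with ho_lt | rfl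
  · exact h o ho ho.pos ho_lt
  · obtain rfl : n = 0 := by
      by_contra hn0
      exact Nat.not_odd_iff_even.mpr even_two ((Nat.odd_pow_iff hn0).mp ho)
    exact one_dvd M

theorem sq_le_two_pow {n : ℕ} (hn : 4 ≤ n) : n ^ 2 ≤ 2 ^ n := by
  induction n, hn using Nat.le_induction with
  | base => norm_num
  | succ n hn ih => nlinarith [pow_succ 2 n]

theorem two_pow_div_sub_one_le {n : ℕ} (hn : 4 ≤ n) :
    (2 : ℝ) ^ n / n - 1 ≤ 2 ^ n - (2 * n + 1) := by
  have hsq : (n : ℝ) ^ 2 ≤ 2 ^ n := by exact_mod_cast sq_le_two_pow hn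
  have hn' : (4 : ℝ) ≤ n := by exact_mod_cast hn
  rw [sub_le_iff_le_add, div_le_iff₀ (by positivity)]
  nlinarith

/-- If `n ≥ 5` and `M ≥ 1` is divisible by every odd `m` with `0 < m < 2 ^ n`, then,
as real numbers, `M ≥ 2 ^ (2 ^ n / n - 1)`. -/
theorem common_multiple_of_odds_superexponential (n M : ℕ) (hn : 5 ≤ n) (hM : 1 ≤ M)
    (h : ∀ m : ℕ, Odd m → 0 < m → m < 2 ^ n → m ∣ M) :
    (2 : ℝ) ^ ((2 : ℝ) ^ (n : ℕ) / (n : ℝ) - 1) ≤ (M : ℝ) := by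
  have hlcm : lcmUpto (2 ^ n) ≤ 2 ^ n * M :=
    Nat.le_of_dvd (by positivity) (lcmUpto_two_pow_dvd_two_pow_mul h)
  have hnat : 2 ^ 2 ^ n ≤ 2 ^ (2 * n + 1) * M := calc
    2 ^ 2 ^ n ≤ (2 ^ n + 1) * lcmUpto (2 ^ n) := Chebyshev.two_pow_le_mul_lcmUpto _
    _ ≤ 2 ^ (n + 1) * (2 ^ n * M) := by gcongr; exact Nat.pow_lt_pow_succ one_lt_two
    _ = 2 ^ (2 * n + 1) * M := by ring
  calc (2 : ℝ) ^ ((2 : ℝ) ^ n / n - 1) ≤ 2 ^ ((2 : ℝ) ^ n - (2 * n + 1)) :=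
        Real.rpow_le_rpow_of_exponent_le one_le_two (two_pow_div_sub_one_le (by omega))
    _ = 2 ^ 2 ^ n / 2 ^ (2 * n + 1) := by rw [Real.rpow_sub two_pos]; norm_cast
    _ ≤ M := by rw [div_le_iff₀' (by positivity)]; exact_mod_cast hnat
end

section
/- Let n ≥ 5 and let M ≥ 1 be an integer such that for every odd integer m with 0 < m < 2^n there exist integers k ≥ 1 and m' with 0 < m' < 2^n satisfying M·2^n + m = k·m·2^n + m'. Then, as real numbers, M·2^n ≥ 2^n · 2^(2^n/n − 1); in particular the counter value M·2^n attained in any winning play of the game G_n is super-exponential in n. -/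
/-!
Since `0 < m, m' < 2 ^ n`, both sides of `M * 2 ^ n + m = k * m * 2 ^ n + m'` are divisions
with remainder by `2 ^ n`, so `M = k * m`: every odd `m < 2 ^ n` divides `M`. Splitting off powers
of two, every `0 < m < 2 ^ n` then divides `2 ^ (n - 1) * M`, and so does every binomial
coefficient `(2B choose B)` with `2B < 2 ^ n`, because the prime powers dividing it are at most
`2B`. The estimate `4 ^ B < B * (2B choose B)` with `B = 2 ^ (n - 1) - 1` gives
`2 ^ 2 ^ n ≤ 4 ^ n * M`.
-/

theorem Int.eq_of_mul_add_eq_mul_add {N a b r r' : ℤ} (hr : 0 ≤ r) (hrN : r < N)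
    (hr' : 0 ≤ r') (hr'N : r' < N) (h : a * N + r = b * N + r') : a = b := by
  have hN : N ≠ 0 := by omega
  have key : ∀ c s : ℤ, 0 ≤ s → s < N → (c * N + s) / N = c := fun c s hs hsN => by
    rw [add_comm, Int.add_mul_ediv_right _ _ hN, Int.ediv_eq_zero_of_lt hs hsN, zero_add]
  rw [← key a r hr hrN, h, key b r' hr' hr'N]

theorem Nat.choose_dvd_of_forall_dvd {n k L : ℕ} (hk : k ≤ n) (hL : L ≠ 0)
    (h : ∀ m, 0 < m → m ≤ n → m ∣ L) : n.choose k ∣ L := by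
  rcases Nat.eq_zero_or_pos n with rfl | hn
  · simp [Nat.le_zero.1 hk]
  rw [← Nat.factorization_le_iff_dvd (Nat.choose_pos hk).ne' hL]
  intro p
  by_cases hp : p.Prime
  · have hpow : p ^ Nat.log p n ∣ L := h _ (pow_pos hp.pos _) (Nat.pow_log_le_self p hn.ne')
    exact Nat.factorization_choose_le_log.trans ((hp.pow_dvd_iff_le_factorization hL).1 hpow)
  · simp [Nat.factorization_eq_zero_of_not_prime _ hp]

theorem Nat.dvd_two_pow_mul_of_forall_odd_dvd {n M m : ℕ}
    (h : ∀ m, Odd m → m < 2 ^ (n + 1) → m ∣ M) (hm : 0 < m) (hmn : m < 2 ^ (n + 1)) :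
    m ∣ 2 ^ n * M := by
  rw [← Nat.ordProj_mul_ordCompl_eq_self m 2]
  refine mul_dvd_mul (pow_dvd_pow 2 ?_) (h _ ?_ ?_)
  · have := (Nat.ordProj_le 2 hm.ne').trans_lt hmn
    have := (Nat.pow_lt_pow_iff_right one_lt_two).1 this
    omega
  · exact Nat.odd_iff.2 (Nat.two_dvd_ne_zero.1 (Nat.not_dvd_ordCompl Nat.prime_two hm.ne'))
  · exact (Nat.ordCompl_le m 2).trans_lt hmn

theorem Nat.four_mul_le_two_pow {n : ℕ} (hn : 4 ≤ n) : 4 * n ≤ 2 ^ n := by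
  induction n, hn using Nat.le_induction with
  | base => norm_num
  | succ k hk ih => rw [pow_succ]; omega

theorem Nat.two_pow_two_pow_le_of_forall_odd_dvd {n M : ℕ} (hn : 4 ≤ n) (hM : M ≠ 0)
    (h : ∀ m, Odd m → m < 2 ^ n → m ∣ M) : 2 ^ 2 ^ n ≤ 4 ^ n * M := by
  obtain ⟨s, rfl⟩ : ∃ s, n = s + 1 := ⟨n - 1, by omega⟩
  set B := 2 ^ s - 1
  have hsB : 2 ^ s = B + 1 := by have := s.one_le_two_pow; omega
  have hB4 : 4 ≤ B := by
    have : 2 ^ 3 ≤ 2 ^ s := Nat.pow_le_pow_right two_pos (by omega)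
    omega
  have hcb : B.centralBinom ∣ 2 ^ s * M := by
    rw [Nat.centralBinom_eq_two_mul_choose]
    refine Nat.choose_dvd_of_forall_dvd (by omega) (by positivity) fun m hm hmB => ?_
    exact Nat.dvd_two_pow_mul_of_forall_odd_dvd h hm (by rw [pow_succ]; omega)
  calc 2 ^ 2 ^ (s + 1) = 4 * 4 ^ B := by
        rw [pow_succ, ← pow_succ', hsB, mul_comm, pow_mul]; norm_num
    _ ≤ 4 * (B * B.centralBinom) := by gcongr; exact (Nat.four_pow_lt_mul_centralBinom B hB4).le
    _ ≤ 4 * (2 ^ s * (2 ^ s * M)) := by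
        gcongr
        · omega
        · exact Nat.le_of_dvd (by positivity) hcb
    _ = 4 ^ (s + 1) * M := by
        rw [show (4 : ℕ) = 2 ^ 2 by rfl, ← pow_mul]; ring

theorem Real.rpow_two_pow_div_sub_one_le {n : ℕ} (hn : 4 ≤ n) {M : ℝ}
    (hM : (2 : ℝ) ^ 2 ^ n ≤ 4 ^ n * M) : (2 : ℝ) ^ ((2 : ℝ) ^ n / n - 1) ≤ M := by
  have hn' : (4 : ℝ) ≤ n := by exact_mod_cast hn
  have h4n : 4 * (n : ℝ) ≤ 2 ^ n := by exact_mod_cast Nat.four_mul_le_two_pow hn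
  have hexp : (2 : ℝ) ^ n / n - 1 ≤ ((2 ^ n : ℕ) : ℝ) - ((2 * n : ℕ) : ℝ) := by
    push_cast
    rw [sub_le_iff_le_add, div_le_iff₀ (by linarith)]
    nlinarith
  calc (2 : ℝ) ^ ((2 : ℝ) ^ n / n - 1)
      ≤ (2 : ℝ) ^ (((2 ^ n : ℕ) : ℝ) - ((2 * n : ℕ) : ℝ)) :=
        Real.rpow_le_rpow_of_exponent_le one_le_two hexp
    _ = 2 ^ 2 ^ n / 4 ^ n := by
        rw [Real.rpow_sub two_pos, Real.rpow_natCast, Real.rpow_natCast, pow_mul]; norm_num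
    _ ≤ M := by rw [div_le_iff₀ (by positivity)]; linarith

theorem game_counter_superexponential_general (n : ℕ) (hn : 5 ≤ n) (M : ℤ)
    (h : ∀ m : ℤ, Odd m → 0 < m → m < 2 ^ n →
      ∃ k m' : ℤ, 1 ≤ k ∧ 0 < m' ∧ m' < 2 ^ n ∧
        M * 2 ^ n + m = k * m * 2 ^ n + m') :
    (2 : ℝ) ^ (n : ℕ) * (2 : ℝ) ^ ((2 : ℝ) ^ (n : ℕ) / (n : ℝ) - 1) ≤
      (M : ℝ) * (2 : ℝ) ^ (n : ℕ) := by
  have hwin : ∀ m : ℤ, Odd m → 0 < m → m < 2 ^ n → ∃ k, 1 ≤ k ∧ M = k * m := by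
    intro m hodd hm hmn
    obtain ⟨k, m', hk, hm', hm'n, heq⟩ := h m hodd hm hmn
    exact ⟨k, hk, Int.eq_of_mul_add_eq_mul_add hm.le hmn hm'.le hm'n heq⟩
  have hM : 0 < M := by
    obtain ⟨k, hk, rfl⟩ := hwin 1 odd_one one_pos (one_lt_pow₀ one_lt_two (by omega))
    omega
  lift M to ℕ using hM.le
  have hdvd : ∀ m : ℕ, Odd m → m < 2 ^ n → m ∣ M := by
    intro m hodd hmn
    obtain ⟨k, -, hMk⟩ :=
      hwin m (by exact_mod_cast hodd) (by exact_mod_cast hodd.pos) (by exact_mod_cast hmn)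
    exact Int.natCast_dvd_natCast.1 ⟨k, by rw [hMk, mul_comm]⟩
  have hbound := Nat.two_pow_two_pow_le_of_forall_odd_dvd (by omega) (by omega) hdvd
  rw [mul_comm]
  gcongr
  exact Real.rpow_two_pow_div_sub_one_le (by omega) (by exact_mod_cast hbound)

/-- Super-exponential counter values in the game `G_n`: if `n ≥ 5` and `M ≥ 1` is
such that for every odd `m` with `0 < m < 2 ^ n` Eve can win, i.e. there are `k ≥ 1`
and `0 < m' < 2 ^ n` with `M * 2 ^ n + m = k * m * 2 ^ n + m'`, then as real numbers
`M * 2 ^ n ≥ 2 ^ n * 2 ^ (2 ^ n / n - 1)`. -/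
theorem game_counter_superexponential (n : ℕ) (hn : 5 ≤ n) (M : ℤ) (hM : 1 ≤ M)
    (h : ∀ m : ℤ, Odd m → 0 < m → m < 2 ^ n →
      ∃ k m' : ℤ, 1 ≤ k ∧ 0 < m' ∧ m' < 2 ^ n ∧
        M * 2 ^ n + m = k * m * 2 ^ n + m') :
    (2 : ℝ) ^ (n : ℕ) * (2 : ℝ) ^ ((2 : ℝ) ^ (n : ℕ) / (n : ℝ) - 1) ≤
      (M : ℝ) * (2 : ℝ) ^ (n : ℕ) :=
  game_counter_superexponential_general n hn M h
end
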